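/- Let (M, 𝒰) satisfy the SAF-condition and 𝒬 be a vector bundle of trivial type on M. Then for every vector bundle homomorphism φ : Λ²(𝒰 ⊗ 𝒬) → Sym²𝒰 there is a holomorphic section ω of Λ²𝒬* such that φₓ(u⊗p, v⊗q) = ωₓ(p,q)·(u⊙v) for all x ∈ M, u,v ∈ 𝒰ₓ, p,q ∈ 𝒬ₓ. -/

import Mathlib

/-!
Along an SAF curve through `(x, u)` the pullback of `𝒰` is `𝒪(a) ⊕ 𝒪^{m-1}` with `u` spanning the
fibre of `𝒪(a)` at the base point, and the pullback of `𝒬` is trivial. A matrix entry of `φ` in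
adapted frames is then a holomorphic section of a line bundle of degree
`deg r + deg s - deg i - deg j` on `ℙ¹` (`i, j` the `𝒰`-indices of the two arguments, `r, s` those
of the value in `Sym² 𝒰`), so by Liouville it vanishes when that degree is negative. At the base
point this says that `φ(u⊗p, v⊗q)` is divisible by `u` in `Sym² 𝒰ₓ` and that `φ(u⊗p, u⊗q)` is a
multiple of `u²`. Both conditions are polynomial in `u`, so they spread from the open set of SAF
directions to all of `𝒰ₓ`, and linear algebra finishes: comparing `v`, `u₀` and `u₀ + v` shows
that `φ(v⊗p, v⊗q) = μ(p,q)·v²` with `μ` independent of `v`, polarisation gives the part of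
`φ(u⊗p, v⊗q)` symmetric in `u, v`, and the antisymmetric part, divisible by both `u` and `v`,
vanishes. Hence `ω = μ/2`.
-/

noncomputable section

open Module
open scoped TensorProduct

/-- Data witnessing that along a rational curve through `(x, u)` the pullback
of the rank-`m` bundle `𝒰` splits as `ℒ ⊕ 𝒪^{m-1}` with `ℒ` ample of degree
`a ≥ 1` and fiber `ℂu` at the base point (SAF-condition), and that the
pullback of the rank-`n` bundle `𝒬` is trivial (trivial type).  The curve is
encoded by its two affine charts `f`, `g` glued by `t ↦ t⁻¹`, and the bundles
by trivializations over the two charts with the indicated transition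
matrices (`diag(t^{-a},1,…,1)` for `𝒰`, the identity for `𝒬`). -/
structure SAFCurveQ (M : Type*) (𝒰 𝒬 : M → Type*)
    [∀ x, AddCommGroup (𝒰 x)] [∀ x, Module ℂ (𝒰 x)]
    [∀ x, AddCommGroup (𝒬 x)] [∀ x, Module ℂ (𝒬 x)]
    (m n : ℕ) (hm : 0 < m) (x : M) (u : 𝒰 x) where
  f : ℂ → M
  g : ℂ → M
  compat : ∀ t : ℂ, t ≠ 0 → f t = g t⁻¹
  basept : f 0 = x
  a : ℕ
  ample : 1 ≤ a
  τ : ∀ t : ℂ, (Fin m → ℂ) ≃ₗ[ℂ] 𝒰 (f t)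
  τ' : ∀ t : ℂ, (Fin m → ℂ) ≃ₗ[ℂ] 𝒰 (g t)
  trans : ∀ (t : ℂ) (ht : t ≠ 0) (c : Fin m → ℂ),
    τ t c = cast (congrArg 𝒰 (compat t ht)).symm
      (τ' t⁻¹ (fun i => (if (i : ℕ) = 0 then (t : ℂ) ^ (-(a : ℤ)) else 1) * c i))
  fiber : ∃ cc : ℂ, cc ≠ 0 ∧ τ 0 (Pi.single ⟨0, hm⟩ 1) = cc • (cast (congrArg 𝒰 basept).symm u)
  κ : ∀ t : ℂ, (Fin n → ℂ) ≃ₗ[ℂ] 𝒬 (f t)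
  κ' : ∀ t : ℂ, (Fin n → ℂ) ≃ₗ[ℂ] 𝒬 (g t)
  transQ : ∀ (t : ℂ) (ht : t ≠ 0) (c : Fin n → ℂ),
    κ t c = cast (congrArg 𝒬 (compat t ht)).symm (κ' t⁻¹ c)

variable {M : Type*} {𝒰 𝒬 : M → Type*}
  [∀ x, AddCommGroup (𝒰 x)] [∀ x, Module ℂ (𝒰 x)]
  [∀ x, AddCommGroup (𝒬 x)] [∀ x, Module ℂ (𝒬 x)]
  {m n : ℕ}

/-- Holomorphy of the bundle homomorphism `φ : Λ²(𝒰 ⊗ 𝒬) → Sym² 𝒰` along a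
curve: all its matrix entries in the given trivializations are holomorphic in
the curve parameter, over both charts.  Here `φ` is encoded fiberwise as an
(alternating) bilinear map on `𝒰ₓ ⊗ 𝒬ₓ` with values in the space of
(symmetric) bilinear forms on `𝒰ₓ*`, the canonical model of `Sym² 𝒰ₓ`. -/
def HolAlongQ (hm : 0 < m) {x : M} {u : 𝒰 x}
    (φ : ∀ y : M, (𝒰 y ⊗[ℂ] 𝒬 y) →ₗ[ℂ] (𝒰 y ⊗[ℂ] 𝒬 y) →ₗ[ℂ]
      (Module.Dual ℂ (𝒰 y) →ₗ[ℂ] Module.Dual ℂ (𝒰 y) →ₗ[ℂ] ℂ))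
    (C : SAFCurveQ M 𝒰 𝒬 m n hm x u) : Prop :=
  (∀ (i j : Fin m) (p q : Fin n) (r s : Fin m),
    Differentiable ℂ (fun t : ℂ =>
      φ (C.f t) ((C.τ t (Pi.single i 1)) ⊗ₜ[ℂ] (C.κ t (Pi.single p 1)))
        ((C.τ t (Pi.single j 1)) ⊗ₜ[ℂ] (C.κ t (Pi.single q 1)))
        ((LinearMap.proj r : ((Fin m → ℂ) →ₗ[ℂ] ℂ)).comp
          ((C.τ t).symm : 𝒰 (C.f t) ≃ₗ[ℂ] (Fin m → ℂ)).toLinearMap)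
        ((LinearMap.proj s : ((Fin m → ℂ) →ₗ[ℂ] ℂ)).comp
          ((C.τ t).symm : 𝒰 (C.f t) ≃ₗ[ℂ] (Fin m → ℂ)).toLinearMap))) ∧
  (∀ (i j : Fin m) (p q : Fin n) (r s : Fin m),
    Differentiable ℂ (fun t : ℂ =>
      φ (C.g t) ((C.τ' t (Pi.single i 1)) ⊗ₜ[ℂ] (C.κ' t (Pi.single p 1)))
        ((C.τ' t (Pi.single j 1)) ⊗ₜ[ℂ] (C.κ' t (Pi.single q 1)))
        ((LinearMap.proj r : ((Fin m → ℂ) →ₗ[ℂ] ℂ)).comp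
          ((C.τ' t).symm : 𝒰 (C.g t) ≃ₗ[ℂ] (Fin m → ℂ)).toLinearMap)
        ((LinearMap.proj s : ((Fin m → ℂ) →ₗ[ℂ] ℂ)).comp
          ((C.τ' t).symm : 𝒰 (C.g t) ≃ₗ[ℂ] (Fin m → ℂ)).toLinearMap)))

open Filter Topology TensorProduct

section Forms

variable {K V W : Type*} [Field K] [AddCommGroup V] [Module K V] [AddCommGroup W] [Module K W]

variable (Φ : V ⊗[K] W →ₗ[K] V ⊗[K] W →ₗ[K] Dual K V →ₗ[K] Dual K V →ₗ[K] K)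

/-- Reading `Φ (u ⊗ p) (u ⊗ q)` as an element of `Sym² V`, it lies in the line `K u²`. -/
def SqDivisibleAt (u : V) : Prop :=
  ∀ (p q : W) (f g : Dual K V), f u = 0 → Φ (u ⊗ₜ p) (u ⊗ₜ q) f g = 0

/-- Reading `Φ (u ⊗ p) (v ⊗ q)` as an element of `Sym² V`, it lies in `u · V`. -/
def DivisibleAt (u : V) : Prop :=
  ∀ (v : V) (p q : W) (f g : Dual K V), f u = 0 → g u = 0 → Φ (u ⊗ₜ p) (v ⊗ₜ q) f g = 0

variable {Φ}

lemma apply_eq_neg_apply_swap (halt : ∀ z, Φ z z = 0) (z z' : V ⊗[K] W) (f g : Dual K V) :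
    Φ z z' f g = -Φ z' z f g := by
  have h := congrArg (fun B => B f g) (halt (z + z'))
  simp only [map_add, LinearMap.add_apply, halt, LinearMap.zero_apply, zero_add, add_zero] at h
  linear_combination h

lemma SqDivisibleAt.apply_eq (hsymm : ∀ z z' f g, Φ z z' f g = Φ z z' g f) {u : V}
    (hu : SqDivisibleAt Φ u) {h : Dual K V} (hh : h u = 1) (p q : W) (f g : Dual K V) :
    Φ (u ⊗ₜ p) (u ⊗ₜ q) f g = f u * g u * Φ (u ⊗ₜ p) (u ⊗ₜ q) h h := by
  have hf := hu p q (f - f u • h) g (by simp [hh])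
  have hg := hu p q (g - g u • h) h (by simp [hh])
  simp only [map_sub, map_smul, LinearMap.sub_apply, LinearMap.smul_apply, smul_eq_mul] at hf hg
  linear_combination hf + f u * hg + f u * hsymm (u ⊗ₜ p) (u ⊗ₜ q) h g

lemma DivisibleAt.apply_add_apply_swap_eq_zero (halt : ∀ z, Φ z z = 0) {u : V}
    (hu : DivisibleAt Φ u) {k : Dual K V} (hk : k u = 0) (v : V) (p q : W) :
    Φ (u ⊗ₜ p) (v ⊗ₜ q) k k + Φ (v ⊗ₜ p) (u ⊗ₜ q) k k = 0 := by
  rw [apply_eq_neg_apply_swap halt (v ⊗ₜ p), hu v p q k k hk hk, hu v q p k k hk hk]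
  simp

lemma apply_add_tmul_add_of_apply_eq_zero (halt : ∀ z, Φ z z = 0) {u : V}
    (hA : SqDivisibleAt Φ u) (hB : DivisibleAt Φ u) {k : Dual K V} (hk : k u = 0) (v : V)
    (p q : W) : Φ ((u + v) ⊗ₜ p) ((u + v) ⊗ₜ q) k k = Φ (v ⊗ₜ p) (v ⊗ₜ q) k k := by
  have hcross := hB.apply_add_apply_swap_eq_zero halt hk v p q
  simp only [add_tmul, map_add, LinearMap.add_apply, hA p q k k hk]
  linear_combination hcross

lemma exists_dual_eq_zero_eq_one_of_notMem_span {u v : V} (hv : v ∉ K ∙ u) :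
    ∃ k : Dual K V, k u = 0 ∧ k v = 1 := by
  obtain ⟨k, hkv, hk⟩ := Submodule.exists_dual_map_eq_bot_of_notMem hv inferInstance
  refine ⟨(k v)⁻¹ • k, ?_, by simp [hkv]⟩
  have : k u ∈ (K ∙ u).map k := Submodule.mem_map_of_mem (Submodule.mem_span_singleton_self u)
  simp_all

lemma SqDivisibleAt.of_smul {c : K} (hc : c ≠ 0) {u : V} (h : SqDivisibleAt Φ (c • u)) :
    SqDivisibleAt Φ u := by
  intro p q f g hf
  simpa [← smul_tmul', hc] using h p q f g (by simp [hf])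

lemma DivisibleAt.of_smul {c : K} (hc : c ≠ 0) {u : V} (h : DivisibleAt Φ (c • u)) :
    DivisibleAt Φ u := by
  intro v p q f g hf hg
  simpa [← smul_tmul', hc] using h v p q f g (by simp [hf]) (by simp [hg])

section Basis

variable {ι ι' : Type*} [Fintype ι] [Fintype ι'] (b : Basis ι K V) (c : Basis ι' K W)

lemma sqDivisibleAt_basis {i₀ : ι}
    (h : ∀ p q r s, r ≠ i₀ → Φ (b i₀ ⊗ₜ c p) (b i₀ ⊗ₜ c q) (b.coord r) (b.coord s) = 0) :
    SqDivisibleAt Φ (b i₀) := by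
  intro P Q f g hf
  have hcoord : ∀ p q r, r ≠ i₀ → Φ (b i₀ ⊗ₜ c p) (b i₀ ⊗ₜ c q) (b.coord r) g = 0 := by
    intro p q r hr
    rw [← b.sum_dual_apply_smul_coord g]
    simp only [map_sum, map_smul, h p q r _ hr, smul_zero, Finset.sum_const_zero]
  rw [← c.sum_repr P, ← c.sum_repr Q, ← b.sum_dual_apply_smul_coord f]
  simp only [tmul_sum, tmul_smul, map_sum, map_smul, LinearMap.coe_sum, Finset.sum_apply,
    LinearMap.smul_apply]
  refine Finset.sum_eq_zero fun r _ => ?_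
  rcases eq_or_ne r i₀ with rfl | hr
  · simp [hf]
  · simp [hcoord _ _ r hr]

lemma divisibleAt_basis {i₀ : ι}
    (h : ∀ j p q r s, r ≠ i₀ → s ≠ i₀ →
      Φ (b i₀ ⊗ₜ c p) (b j ⊗ₜ c q) (b.coord r) (b.coord s) = 0) :
    DivisibleAt Φ (b i₀) := by
  intro v P Q f g hf hg
  have hcoord : ∀ j p q r, r ≠ i₀ → Φ (b i₀ ⊗ₜ c p) (b j ⊗ₜ c q) (b.coord r) g = 0 := by
    intro j p q r hr
    rw [← b.sum_dual_apply_smul_coord g]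
    simp only [map_sum, map_smul, smul_eq_mul]
    refine Finset.sum_eq_zero fun s _ => ?_
    rcases eq_or_ne s i₀ with rfl | hs
    · simp [hg]
    · simp [h j p q r s hr hs]
  rw [← b.sum_repr v, ← c.sum_repr P, ← c.sum_repr Q, ← b.sum_dual_apply_smul_coord f]
  simp only [tmul_sum, sum_tmul, tmul_smul, ← smul_tmul', map_sum, map_smul, LinearMap.coe_sum,
    Finset.sum_apply, LinearMap.smul_apply]
  refine Finset.sum_eq_zero fun r _ => ?_
  rcases eq_or_ne r i₀ with rfl | hr
  · simp [hf]
  · simp [hcoord _ _ _ r hr]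

lemma coord_map_piBasisFun {k : ℕ} (τ : (Fin k → K) ≃ₗ[K] V) (r : Fin k) :
    ((Pi.basisFun K (Fin k)).map τ).coord r = (LinearMap.proj r).comp τ.symm.toLinearMap := by
  ext w
  simp

end Basis

variable (halt : ∀ z, Φ z z = 0) (hsymm : ∀ z z' f g, Φ z z' f g = Φ z z' g f)
include halt hsymm

lemma apply_tmul_tmul_self_eq (hA : ∀ u, SqDivisibleAt Φ u) (hB : ∀ u, DivisibleAt Φ u)
    {u₀ : V} {h₀ : Dual K V} (hh₀ : h₀ u₀ = 1) (v : V) (p q : W) (f g : Dual K V) :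
    Φ (v ⊗ₜ p) (v ⊗ₜ q) f g = Φ (u₀ ⊗ₜ p) (u₀ ⊗ₜ q) h₀ h₀ * (f v * g v) := by
  by_cases hv : v ∈ K ∙ u₀
  · obtain ⟨t, rfl⟩ := Submodule.mem_span_singleton.mp hv
    simp only [← smul_tmul', map_smul, LinearMap.smul_apply, smul_eq_mul,
      (hA u₀).apply_eq hsymm hh₀ p q f g]
    ring
  obtain ⟨k, hku₀, hkv⟩ := exists_dual_eq_zero_eq_one_of_notMem_span hv
  set k' := h₀ - h₀ v • k
  have hk'u₀ : k' u₀ = 1 := by simp [k', hku₀, hh₀]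
  have hk'v : k' v = 0 := by simp [k', hkv]
  calc Φ (v ⊗ₜ p) (v ⊗ₜ q) f g = f v * g v * Φ (v ⊗ₜ p) (v ⊗ₜ q) k k :=
        (hA v).apply_eq hsymm hkv p q f g
    _ = f v * g v * Φ ((u₀ + v) ⊗ₜ p) ((u₀ + v) ⊗ₜ q) k k := by
        rw [apply_add_tmul_add_of_apply_eq_zero halt (hA u₀) (hB u₀) hku₀]
    _ = f v * g v * Φ ((v + u₀) ⊗ₜ p) ((v + u₀) ⊗ₜ q) k' k' := by
        rw [add_comm u₀ v, (hA (v + u₀)).apply_eq hsymm (h := k') (by simp [hk'u₀, hk'v]) p q k k]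
        simp [hku₀, hkv]
    _ = Φ (u₀ ⊗ₜ p) (u₀ ⊗ₜ q) h₀ h₀ * (f v * g v) := by
        rw [apply_add_tmul_add_of_apply_eq_zero halt (hA v) (hB v) hk'v,
          (hA u₀).apply_eq hsymm hh₀ p q k' k', hk'u₀]
        ring

lemma apply_add_apply_swap_eq (hA : ∀ u, SqDivisibleAt Φ u) (hB : ∀ u, DivisibleAt Φ u)
    {u₀ : V} {h₀ : Dual K V} (hh₀ : h₀ u₀ = 1) (u v : V) (p q : W) (f g : Dual K V) :
    Φ (u ⊗ₜ p) (v ⊗ₜ q) f g + Φ (v ⊗ₜ p) (u ⊗ₜ q) f g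
      = Φ (u₀ ⊗ₜ p) (u₀ ⊗ₜ q) h₀ h₀ * (f u * g v + f v * g u) := by
  have e := apply_tmul_tmul_self_eq halt hsymm hA hB hh₀
  have huv := e (u + v) p q f g
  simp only [add_tmul, map_add, LinearMap.add_apply] at huv
  linear_combination huv - e u p q f g - e v p q f g

lemma apply_tmul_tmul_same_eq_zero [NeZero (2 : K)] (hB : ∀ u, DivisibleAt Φ u) (u v : V) (r : W)
    (f g : Dual K V) : Φ (u ⊗ₜ r) (v ⊗ₜ r) f g = 0 := by
  have hdiag : ∀ f : Dual K V, Φ (u ⊗ₜ r) (v ⊗ₜ r) f f = 0 := by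
    intro f
    by_cases hfv : f v = 0
    · rw [apply_eq_neg_apply_swap halt, hB v u r r f f hfv hfv, neg_zero]
    -- replacing `u` by `u - c • v` does not change `Φ (u ⊗ r) (v ⊗ r)`, and for the right `c`
    -- it makes `f u = 0`
    obtain ⟨c, hc⟩ : ∃ c, c = f u / f v := ⟨_, rfl⟩
    obtain ⟨u', hu'⟩ : ∃ u', u' = u - c • v := ⟨_, rfl⟩
    have hfu' : f u' = 0 := by simp [hu', hc, hfv]
    rw [show u = u' + c • v by rw [hu']; abel, add_tmul, ← smul_tmul', map_add, map_smul,
      LinearMap.add_apply, LinearMap.smul_apply, halt, smul_zero, add_zero]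
    exact hB u' v r r f f hfu' hfu'
  have hfg := hdiag (f + g)
  simp only [map_add, LinearMap.add_apply, hdiag, zero_add, add_zero,
    hsymm (u ⊗ₜ r) (v ⊗ₜ r) g f] at hfg
  have h2 : (2 : K) * Φ (u ⊗ₜ r) (v ⊗ₜ r) f g = 0 := by linear_combination hfg
  exact (mul_eq_zero.mp h2).resolve_left two_ne_zero

theorem exists_alternating_form_of_divisibleAt [NeZero (2 : K)] [Nontrivial V]
    (hA : ∀ u, SqDivisibleAt Φ u) (hB : ∀ u, DivisibleAt Φ u) :
    ∃ ω : W →ₗ[K] W →ₗ[K] K, (∀ p, ω p p = 0) ∧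
      ∀ (u v : V) (p q : W) (f g : Dual K V),
        Φ (u ⊗ₜ p) (v ⊗ₜ q) f g = ω p q * (f u * g v + f v * g u) := by
  obtain ⟨u₀, hu₀⟩ := exists_ne (0 : V)
  obtain ⟨h₀, hh₀⟩ := Module.Projective.exists_dual_eq_one K hu₀
  let eval : (Dual K V →ₗ[K] Dual K V →ₗ[K] K) →ₗ[K] K :=
    LinearMap.applyₗ h₀ ∘ₗ LinearMap.applyₗ h₀
  refine ⟨(2⁻¹ : K) •
      (Φ.compl₁₂ (TensorProduct.mk K V W u₀) (TensorProduct.mk K V W u₀)).compr₂ eval,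
    fun p => by simp [eval, halt], fun u v p q f g => ?_⟩
  have hsum := apply_add_apply_swap_eq halt hsymm hA hB hh₀ u v p q f g
  have hpq := apply_tmul_tmul_same_eq_zero halt hsymm hB u v (p + q) f g
  simp only [tmul_add, map_add, LinearMap.add_apply, apply_tmul_tmul_same_eq_zero halt hsymm hB,
    zero_add, add_zero] at hpq
  have hswap := apply_eq_neg_apply_swap halt (v ⊗ₜ p) (u ⊗ₜ q) f g
  simp only [eval, LinearMap.smul_apply, LinearMap.compr₂_apply, LinearMap.compl₁₂_apply,
    TensorProduct.mk_apply, LinearMap.coe_comp, Function.comp_apply, LinearMap.applyₗ_apply_apply,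
    smul_eq_mul]
  have h2 : 2 * Φ (u ⊗ₜ p) (v ⊗ₜ q) f g
      = Φ (u₀ ⊗ₜ p) (u₀ ⊗ₜ q) h₀ h₀ * (f u * g v + f v * g u) := by
    linear_combination hsum - hswap + hpq
  rw [mul_assoc, ← h2, ← mul_assoc, inv_mul_cancel₀ two_ne_zero, one_mul]

end Forms

section Extension

variable {V W : Type*} [AddCommGroup V] [Module ℂ V] [AddCommGroup W] [Module ℂ W]
  {Φ : V ⊗[ℂ] W →ₗ[ℂ] V ⊗[ℂ] W →ₗ[ℂ] Dual ℂ V →ₗ[ℂ] Dual ℂ V →ₗ[ℂ] ℂ}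
  {S : Set V} (hS : ∀ u ∈ S, ∀ w : V, ∀ᶠ c : ℂ in 𝓝 0, u + c • w ∈ S) {u₀ : V} (hu₀ : u₀ ∈ S)
include hS hu₀

lemma eq_zero_of_forall_mem_eq_zero {E : V → ℂ}
    (hE : ∀ u w : V, Differentiable ℂ fun c : ℂ => E (u + c • w)) (hES : ∀ u ∈ S, E u = 0)
    (v : V) : E v = 0 := by
  have hF := Complex.analyticOnNhd_univ_iff_differentiable.mpr (hE u₀ (v - u₀))
  have h := hF.eqOn_zero_of_preconnected_of_eventuallyEq_zero isPreconnected_univ (Set.mem_univ 0)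
    (by filter_upwards [hS u₀ hu₀ (v - u₀)] with c hc using hES _ hc) (Set.mem_univ 1)
  simpa using h

lemma sqDivisibleAt_of_forall_mem (hA : ∀ u ∈ S, SqDivisibleAt Φ u) (v : V) :
    SqDivisibleAt Φ v := by
  -- `h u • f - f u • h` kills `u` for every `h`; in this form the condition is polynomial in `u`
  have key (p q : W) (f g h : Dual ℂ V) (u : V) :
      Φ (u ⊗ₜ p) (u ⊗ₜ q) (h u • f - f u • h) g = 0 := by
    refine eq_zero_of_forall_mem_eq_zero hS hu₀
      (E := fun u => Φ (u ⊗ₜ p) (u ⊗ₜ q) (h u • f - f u • h) g)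
      (fun u w => ?_) (fun u hu => hA u hu p q _ g (by simp [mul_comm])) u
    simp only [add_tmul, ← smul_tmul', map_add, map_smul, LinearMap.add_apply,
      LinearMap.smul_apply, map_sub, LinearMap.sub_apply, smul_eq_mul]
    fun_prop
  intro p q f g hf
  rcases eq_or_ne v 0 with rfl | hv
  · simp
  obtain ⟨h, hh⟩ := Module.Projective.exists_dual_eq_one ℂ hv
  simpa [hh, hf] using key p q f g h v

lemma divisibleAt_of_forall_mem (hB : ∀ u ∈ S, DivisibleAt Φ u) (v : V) :
    DivisibleAt Φ v := by
  have key (v' : V) (p q : W) (f g h : Dual ℂ V) (u : V) :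
      Φ (u ⊗ₜ p) (v' ⊗ₜ q) (h u • f - f u • h) (h u • g - g u • h) = 0 := by
    refine eq_zero_of_forall_mem_eq_zero hS hu₀
      (E := fun u => Φ (u ⊗ₜ p) (v' ⊗ₜ q) (h u • f - f u • h) (h u • g - g u • h))
      (fun u w => ?_) (fun u hu => hB u hu v' p q _ _ (by simp [mul_comm]) (by simp [mul_comm])) u
    simp only [add_tmul, ← smul_tmul', map_add, map_smul, LinearMap.add_apply,
      LinearMap.smul_apply, map_sub, LinearMap.sub_apply, smul_eq_mul]
    fun_prop
  intro v' p q f g hf hg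
  rcases eq_or_ne v 0 with rfl | hv
  · simp
  obtain ⟨h, hh⟩ := Module.Projective.exists_dual_eq_one ℂ hv
  simpa [hh, hf, hg] using key v' p q f g h v

theorem exists_alternating_form_of_forall_mem (h0 : (0 : V) ∉ S) (halt : ∀ z, Φ z z = 0)
    (hsymm : ∀ z z' f g, Φ z z' f g = Φ z z' g f) (hA : ∀ u ∈ S, SqDivisibleAt Φ u)
    (hB : ∀ u ∈ S, DivisibleAt Φ u) :
    ∃ ω : W →ₗ[ℂ] W →ₗ[ℂ] ℂ, (∀ p, ω p p = 0) ∧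
      ∀ (u v : V) (p q : W) (f g : Dual ℂ V),
        Φ (u ⊗ₜ p) (v ⊗ₜ q) f g = ω p q * (f u * g v + f v * g u) := by
  have : Nontrivial V := ⟨⟨u₀, 0, fun h => h0 (h ▸ hu₀)⟩⟩
  exact exists_alternating_form_of_divisibleAt halt hsymm (sqDivisibleAt_of_forall_mem hS hu₀ hA)
    (divisibleAt_of_forall_mem hS hu₀ hB)

end Extension

lemma eq_zero_of_inv_eq_pow_mul {F G : ℂ → ℂ} (hF : Differentiable ℂ F) (hG : Differentiable ℂ G)
    {k : ℕ} (hk : k ≠ 0) (hrel : ∀ t ≠ 0, G t⁻¹ = t ^ k * F t) : F 0 = 0 := by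
  have hG0 (s : ℂ) : G s = 0 := by
    refine hG.apply_eq_of_tendsto_cocompact s ?_
    have hpow : Tendsto (fun t : ℂ => t ^ k * F t) (𝓝 0) (𝓝 0) :=
      ((continuous_pow k).mul hF.continuous).tendsto' 0 0 (by simp [hk])
    rw [← Metric.cobounded_eq_cocompact]
    refine (hpow.comp tendsto_inv₀_cobounded).congr' ?_
    filter_upwards [Bornology.eventually_ne_cobounded 0] with s hs
    simpa using (hrel s⁻¹ (inv_ne_zero hs)).symm
  have hF0 : Set.EqOn F 0 {0}ᶜ := fun t ht => by
    simpa [hG0, pow_ne_zero k ht] using hrel t ht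
  exact congrFun (hF.continuous.ext_on (dense_compl_singleton 0) continuous_const hF0) 0

def trivializedEntry
    (φ : ∀ y : M, (𝒰 y ⊗[ℂ] 𝒬 y) →ₗ[ℂ] (𝒰 y ⊗[ℂ] 𝒬 y) →ₗ[ℂ]
      (Module.Dual ℂ (𝒰 y) →ₗ[ℂ] Module.Dual ℂ (𝒰 y) →ₗ[ℂ] ℂ))
    (c : ℂ → M) (τ : ∀ t, (Fin m → ℂ) ≃ₗ[ℂ] 𝒰 (c t)) (κ : ∀ t, (Fin n → ℂ) ≃ₗ[ℂ] 𝒬 (c t))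
    (i j : Fin m) (p q : Fin n) (r s : Fin m) (t : ℂ) : ℂ :=
  φ (c t) (τ t (Pi.single i 1) ⊗ₜ κ t (Pi.single p 1)) (τ t (Pi.single j 1) ⊗ₜ κ t (Pi.single q 1))
    ((LinearMap.proj r).comp (τ t).symm.toLinearMap)
    ((LinearMap.proj s).comp (τ t).symm.toLinearMap)

lemma apply_cast_symm_tmul
    (φ : ∀ y : M, (𝒰 y ⊗[ℂ] 𝒬 y) →ₗ[ℂ] (𝒰 y ⊗[ℂ] 𝒬 y) →ₗ[ℂ]
      (Module.Dual ℂ (𝒰 y) →ₗ[ℂ] Module.Dual ℂ (𝒰 y) →ₗ[ℂ] ℂ))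
    {y z : M} (h : y = z) (A B : 𝒰 z) (P Q : 𝒬 z) (F G : Module.Dual ℂ (𝒰 z)) :
    φ y ((LinearEquiv.cast (R := ℂ) h).symm A ⊗ₜ (LinearEquiv.cast (R := ℂ) h).symm P)
        ((LinearEquiv.cast (R := ℂ) h).symm B ⊗ₜ (LinearEquiv.cast (R := ℂ) h).symm Q)
        (F ∘ₗ (LinearEquiv.cast (R := ℂ) (M := 𝒰) h).toLinearMap)
        (G ∘ₗ (LinearEquiv.cast (R := ℂ) (M := 𝒰) h).toLinearMap)
      = φ z (A ⊗ₜ P) (B ⊗ₜ Q) F G := by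
  subst h
  rfl

lemma cast_symm_iff {ι : Type*} {F : ι → Type*} (P : ∀ i, F i → Prop) {i j : ι} (h : i = j)
    (u : F j) : P i (cast (congrArg F h).symm u) ↔ P j u := by
  subst h
  rfl

namespace SAFCurveQ

variable {hm : 0 < m} {x : M} {u : 𝒰 x} (C : SAFCurveQ M 𝒰 𝒬 m n hm x u)

/-- The degree of the `i`-th summand of `f* 𝒰 ≅ 𝒪(a) ⊕ 𝒪^{m-1}`: the transition matrix in
`SAFCurveQ.trans` is `diag (t ^ (-deg i))`. -/
def deg (i : Fin m) : ℤ := if (i : ℕ) = 0 then C.a else 0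

lemma deg_zero : C.deg ⟨0, hm⟩ = C.a := by simp [deg]

lemma deg_of_ne {r : Fin m} (hr : r ≠ ⟨0, hm⟩) : C.deg r = 0 :=
  if_neg fun h => hr (Fin.ext h)

lemma deg_nonneg (i : Fin m) : 0 ≤ C.deg i := by
  unfold deg; split_ifs <;> simp

lemma deg_le (i : Fin m) : C.deg i ≤ C.a := by
  unfold deg; split_ifs <;> simp

lemma tau_single {t : ℂ} (ht : t ≠ 0) (i : Fin m) :
    C.τ t (Pi.single i 1) = (LinearEquiv.cast (R := ℂ) (C.compat t ht)).symm
      (t ^ (-C.deg i) • C.τ' t⁻¹ (Pi.single i 1)) := by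
  rw [C.trans t ht, ← map_smul]
  congr 2
  funext l
  rcases eq_or_ne l i with rfl | hl
  · by_cases h0 : (l : ℕ) = 0 <;> simp [deg, h0]
  · simp [hl]

lemma kappa_single {t : ℂ} (ht : t ≠ 0) (p : Fin n) :
    C.κ t (Pi.single p 1) = (LinearEquiv.cast (R := ℂ) (C.compat t ht)).symm
      (C.κ' t⁻¹ (Pi.single p 1)) :=
  C.transQ t ht _

lemma coord_eq {t : ℂ} (ht : t ≠ 0) (r : Fin m) :
    (LinearMap.proj r).comp (C.τ t).symm.toLinearMap
      = t ^ C.deg r • ((LinearMap.proj r).comp (C.τ' t⁻¹).symm.toLinearMap).comp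
          (LinearEquiv.cast (R := ℂ) (M := 𝒰) (C.compat t ht)).toLinearMap := by
  ext w
  obtain ⟨c, rfl⟩ := (C.τ t).surjective w
  have h := C.trans t ht c
  simp only [LinearMap.comp_apply, LinearEquiv.coe_coe, LinearEquiv.symm_apply_apply,
    LinearMap.proj_apply, LinearMap.smul_apply, smul_eq_mul]
  rw [h]
  simp only [LinearEquiv.cast_apply, cast_cast, cast_eq, LinearEquiv.symm_apply_apply, deg]
  split_ifs <;> simp [ht]

lemma trivializedEntry_inv
    (φ : ∀ y : M, (𝒰 y ⊗[ℂ] 𝒬 y) →ₗ[ℂ] (𝒰 y ⊗[ℂ] 𝒬 y) →ₗ[ℂ]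
      (Module.Dual ℂ (𝒰 y) →ₗ[ℂ] Module.Dual ℂ (𝒰 y) →ₗ[ℂ] ℂ))
    {t : ℂ} (ht : t ≠ 0) (i j : Fin m) (p q : Fin n) (r s : Fin m) :
    trivializedEntry φ C.g C.τ' C.κ' i j p q r s t⁻¹
      = t ^ (C.deg i + C.deg j - C.deg r - C.deg s)
          * trivializedEntry φ C.f C.τ C.κ i j p q r s t := by
  simp only [trivializedEntry]
  rw [C.tau_single ht, C.tau_single ht, C.kappa_single ht, C.kappa_single ht, C.coord_eq ht,
    C.coord_eq ht]
  simp only [map_smul, ← smul_tmul', LinearMap.smul_apply, smul_eq_mul, apply_cast_symm_tmul]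
  simp only [← mul_assoc, ← zpow_add₀ ht]
  rw [show C.deg i + C.deg j - C.deg r - C.deg s + (C.deg s + (C.deg r + (-C.deg j + -C.deg i)))
    = 0 by ring, zpow_zero, one_mul]

variable {C}
variable {φ : ∀ y : M, (𝒰 y ⊗[ℂ] 𝒬 y) →ₗ[ℂ] (𝒰 y ⊗[ℂ] 𝒬 y) →ₗ[ℂ]
      (Module.Dual ℂ (𝒰 y) →ₗ[ℂ] Module.Dual ℂ (𝒰 y) →ₗ[ℂ] ℂ)}

/-- The entry is a section of a line bundle of negative degree along the curve. -/
lemma trivializedEntry_zero_eq_zero (hol : HolAlongQ hm φ C) {i j r s : Fin m} (p q : Fin n)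
    (hlt : C.deg r + C.deg s < C.deg i + C.deg j) :
    trivializedEntry φ C.f C.τ C.κ i j p q r s 0 = 0 := by
  obtain ⟨N, hN⟩ : ∃ N : ℕ, (N : ℤ) = C.deg i + C.deg j - C.deg r - C.deg s :=
    ⟨_, Int.toNat_of_nonneg (by omega)⟩
  refine eq_zero_of_inv_eq_pow_mul (hol.1 i j p q r s) (hol.2 i j p q r s) (k := N) (by omega)
    fun t ht => ?_
  change trivializedEntry φ C.g C.τ' C.κ' i j p q r s t⁻¹ = _
  rw [C.trivializedEntry_inv φ ht, ← hN, zpow_natCast]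

lemma sqDivisibleAt_tau_zero (hol : HolAlongQ hm φ C) :
    SqDivisibleAt (φ (C.f 0)) (C.τ 0 (Pi.single ⟨0, hm⟩ 1)) := by
  have key := sqDivisibleAt_basis ((Pi.basisFun ℂ (Fin m)).map (C.τ 0))
    ((Pi.basisFun ℂ (Fin n)).map (C.κ 0)) (Φ := φ (C.f 0)) (i₀ := ⟨0, hm⟩) fun p q r s hr => by
      have := C.trivializedEntry_zero_eq_zero hol (i := ⟨0, hm⟩) (j := ⟨0, hm⟩) (r := r) (s := s)
        p q (by have := C.deg_le s; have := C.ample; rw [C.deg_zero, C.deg_of_ne hr]; omega)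
      simpa [trivializedEntry, coord_map_piBasisFun] using this
  simpa using key

lemma divisibleAt_tau_zero (hol : HolAlongQ hm φ C) :
    DivisibleAt (φ (C.f 0)) (C.τ 0 (Pi.single ⟨0, hm⟩ 1)) := by
  have key := divisibleAt_basis ((Pi.basisFun ℂ (Fin m)).map (C.τ 0))
    ((Pi.basisFun ℂ (Fin n)).map (C.κ 0)) (Φ := φ (C.f 0)) (i₀ := ⟨0, hm⟩) fun j p q r s hr hs => by
      have := C.trivializedEntry_zero_eq_zero hol (i := ⟨0, hm⟩) (j := j) (r := r) (s := s)
        p q (by have := C.deg_nonneg j; have := C.ample; rw [C.deg_zero, C.deg_of_ne hr,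
          C.deg_of_ne hs]; omega)
      simpa [trivializedEntry, coord_map_piBasisFun] using this
  simpa using key

lemma sqDivisibleAt (hol : HolAlongQ hm φ C) : SqDivisibleAt (φ x) u := by
  obtain ⟨c, hc, hfiber⟩ := C.fiber
  have h := C.sqDivisibleAt_tau_zero hol
  rw [hfiber] at h
  exact (cast_symm_iff (fun y => SqDivisibleAt (φ y)) C.basept u).mp (h.of_smul hc)

lemma divisibleAt (hol : HolAlongQ hm φ C) : DivisibleAt (φ x) u := by
  obtain ⟨c, hc, hfiber⟩ := C.fiber
  have h := C.divisibleAt_tau_zero hol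
  rw [hfiber] at h
  exact (cast_symm_iff (fun y => DivisibleAt (φ y)) C.basept u).mp (h.of_smul hc)

end SAFCurveQ

theorem hom_wedge_to_sym_is_given_by_presymplectic_form_general
    (hm : 0 < m)
    (M' : Set M)
    (Uo : ∀ x : M, Set (𝒰 x))
    (hUo : ∀ x ∈ M', (Uo x).Nonempty ∧ (0 : 𝒰 x) ∉ Uo x)
    (hUoOpen : ∀ x ∈ M', ∀ u ∈ Uo x, ∀ w : 𝒰 x,
      ∀ᶠ c : ℂ in nhds 0, u + c • w ∈ Uo x)
    (φ : ∀ y : M, (𝒰 y ⊗[ℂ] 𝒬 y) →ₗ[ℂ] (𝒰 y ⊗[ℂ] 𝒬 y) →ₗ[ℂ]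
      (Module.Dual ℂ (𝒰 y) →ₗ[ℂ] Module.Dual ℂ (𝒰 y) →ₗ[ℂ] ℂ))
    -- φ is defined on Λ²(𝒰 ⊗ 𝒬), i.e. it is alternating :
    (halt : ∀ (y : M) (z : 𝒰 y ⊗[ℂ] 𝒬 y), φ y z z = 0)
    -- φ takes values in Sym² 𝒰 (symmetric bilinear forms on 𝒰*) :
    (hsymval : ∀ (y : M) (z z' : 𝒰 y ⊗[ℂ] 𝒬 y)
      (f g : Module.Dual ℂ (𝒰 y)), φ y z z' f g = φ y z z' g f)
    -- SAF-condition for (M, 𝒰), triviality of 𝒬, and holomorphy of φ along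
    -- the SAF curves :
    (hSAF : ∀ x ∈ M', ∀ u ∈ Uo x,
      ∃ C : SAFCurveQ M 𝒰 𝒬 m n hm x u, HolAlongQ hm φ C) :
    ∃ ωs : ∀ x : M, 𝒬 x →ₗ[ℂ] 𝒬 x →ₗ[ℂ] ℂ,
      (∀ (x : M) (p : 𝒬 x), ωs x p p = 0) ∧
      ∀ x ∈ M', ∀ (u v : 𝒰 x) (p q : 𝒬 x) (f g : Module.Dual ℂ (𝒰 x)),
        φ x (u ⊗ₜ[ℂ] p) (v ⊗ₜ[ℂ] q) f g
          = ωs x p q * (f u * g v + f v * g u) := by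
  have hpoint (x : M) : ∃ ω : 𝒬 x →ₗ[ℂ] 𝒬 x →ₗ[ℂ] ℂ, (∀ p, ω p p = 0) ∧ (x ∈ M' →
      ∀ (u v : 𝒰 x) (p q : 𝒬 x) (f g : Module.Dual ℂ (𝒰 x)),
        φ x (u ⊗ₜ[ℂ] p) (v ⊗ₜ[ℂ] q) f g = ω p q * (f u * g v + f v * g u)) := by
    by_cases hx : x ∈ M'
    · obtain ⟨⟨u₀, hu₀⟩, h0⟩ := hUo x hx
      obtain ⟨ω, hω, hφ⟩ := exists_alternating_form_of_forall_mem (hUoOpen x hx) hu₀ h0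
        (halt x) (hsymval x) (fun u hu => (hSAF x hx u hu).elim fun C hol => C.sqDivisibleAt hol)
        (fun u hu => (hSAF x hx u hu).elim fun C hol => C.divisibleAt hol)
      exact ⟨ω, hω, fun _ => hφ⟩
    · exact ⟨0, fun _ => rfl, fun h => absurd h hx⟩
  choose ωs hωs hφ using hpoint
  exact ⟨ωs, hωs, hφ⟩

theorem hom_wedge_to_sym_is_given_by_presymplectic_form
    [∀ x, FiniteDimensional ℂ (𝒰 x)] [∀ x, FiniteDimensional ℂ (𝒬 x)]
    (hm : 0 < m) (hm2 : 2 ≤ m)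
    (hrkU : ∀ x, finrank ℂ (𝒰 x) = m) (hrkQ : ∀ x, finrank ℂ (𝒬 x) = n)
    (M' : Set M) (hM' : M'.Nonempty)
    (Uo : ∀ x : M, Set (𝒰 x))
    (hUo : ∀ x ∈ M', (Uo x).Nonempty ∧ (0 : 𝒰 x) ∉ Uo x)
    (hUoOpen : ∀ x ∈ M', ∀ u ∈ Uo x, ∀ w : 𝒰 x,
      ∀ᶠ c : ℂ in nhds 0, u + c • w ∈ Uo x)
    (φ : ∀ y : M, (𝒰 y ⊗[ℂ] 𝒬 y) →ₗ[ℂ] (𝒰 y ⊗[ℂ] 𝒬 y) →ₗ[ℂ]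
      (Module.Dual ℂ (𝒰 y) →ₗ[ℂ] Module.Dual ℂ (𝒰 y) →ₗ[ℂ] ℂ))
    -- φ is defined on Λ²(𝒰 ⊗ 𝒬), i.e. it is alternating :
    (halt : ∀ (y : M) (z : 𝒰 y ⊗[ℂ] 𝒬 y), φ y z z = 0)
    -- φ takes values in Sym² 𝒰 (symmetric bilinear forms on 𝒰*) :
    (hsymval : ∀ (y : M) (z z' : 𝒰 y ⊗[ℂ] 𝒬 y)
      (f g : Module.Dual ℂ (𝒰 y)), φ y z z' f g = φ y z z' g f)
    -- SAF-condition for (M, 𝒰), triviality of 𝒬, and holomorphy of φ along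
    -- the SAF curves :
    (hSAF : ∀ x ∈ M', ∀ u ∈ Uo x,
      ∃ C : SAFCurveQ M 𝒰 𝒬 m n hm x u, HolAlongQ hm φ C) :
    ∃ ωs : ∀ x : M, 𝒬 x →ₗ[ℂ] 𝒬 x →ₗ[ℂ] ℂ,
      (∀ (x : M) (p : 𝒬 x), ωs x p p = 0) ∧
      ∀ x ∈ M', ∀ (u v : 𝒰 x) (p q : 𝒬 x) (f g : Module.Dual ℂ (𝒰 x)),
        φ x (u ⊗ₜ[ℂ] p) (v ⊗ₜ[ℂ] q) f g
          = ωs x p q * (f u * g v + f v * g u) :=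
  hom_wedge_to_sym_is_given_by_presymplectic_form_general hm M' Uo hUo hUoOpen φ halt hsymval hSAF
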